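/- After an incremental update on the set E_i(v) of edges incoming to v, every shortest path π from b to s in G' is of one of two types: (i) π is also a shortest path from b to s in G; or (ii) π passes through v and has the form b ⇝ u_j → v ⇝ s for some (u_j,v) ∈ E_i(v), where the prefix b ⇝ u_j is a shortest path from b to u_j in G and the suffix v ⇝ s is a shortest path from v to s in G. -/

import Mathlib

open scoped ENNReal

namespace BC

variable {V : Type*}

/-- `p` is a path from `s` to `t` in the weighted digraph with weight function `w`;
an edge is present iff its weight is not `⊤`. -/
def IsPath (w : V → V → ℝ≥0∞) (s t : V) (p : List V) : Prop :=
  p ≠ [] ∧ p.head? = some s ∧ p.getLast? = some t ∧ p.Chain' (fun a b => w a b ≠ ⊤)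

/-- The weight of a path: the sum of the weights of its consecutive edges. -/
noncomputable def pWeight (w : V → V → ℝ≥0∞) (p : List V) : ℝ≥0∞ :=
  ((p.zip p.tail).map fun e => w e.1 e.2).sum

/-- The shortest-path distance `d(s,t)` (equal to `⊤` if no path exists). -/
noncomputable def dist (w : V → V → ℝ≥0∞) (s t : V) : ℝ≥0∞ :=
  ⨅ p ∈ {p | IsPath w s t p}, pWeight w p

/-- `p` is a shortest path from `s` to `t`. -/
def IsShortest (w : V → V → ℝ≥0∞) (s t : V) (p : List V) : Prop :=
  IsPath w s t p ∧ pWeight w p = dist w s t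

/-- `σ_{st}`: the number of shortest paths from `s` to `t`. -/
noncomputable def nsp (w : V → V → ℝ≥0∞) (s t : V) : ℕ :=
  Set.ncard {p | IsShortest w s t p}

/-- `σ_{st}(x)`: the number of shortest paths from `s` to `t` passing through `x`. -/
noncomputable def nspVia (w : V → V → ℝ≥0∞) (s t x : V) : ℕ :=
  Set.ncard {p | IsShortest w s t p ∧ x ∈ p}

/-- The directed edge `(a,b)` lies on the path `p`. -/
def edgeOn (p : List V) (a b : V) : Prop := (a, b) ∈ p.zip p.tail

/-- The shortest-path DAG rooted at `s`: the edges lying on shortest paths from `s`. -/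
def dagSet (w : V → V → ℝ≥0∞) (s : V) : Set (V × V) :=
  {e | w e.1 e.2 ≠ ⊤ ∧ dist w s e.1 ≠ ⊤ ∧ dist w s e.1 + w e.1 e.2 = dist w s e.2}

/-! Since the update only lowers weights, `d' ≤ d`; hence a shortest path of `G'` all of whose
edges keep their old weight has the same weight in `G` and is already shortest there. If instead
a shortest path of `G'` uses an updated edge `(u, v)`, split it there. Both pieces are shortest
in `G'`, and as all weights are positive the path is simple, so `v` occurs in it only as the
head of the suffix. Thus no edge of either piece enters `v`, neither uses an updated edge, and
both are shortest in `G`. -/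

theorem _root_.List.exists_eq_append_cons_append_cons_of_not_nodup {α : Type*} {l : List α}
    (h : ¬ l.Nodup) : ∃ a x b c, l = a ++ x :: (b ++ x :: c) := by
  obtain ⟨x, hx⟩ : ∃ x, [x, x].Sublist l := by simpa [List.nodup_iff_sublist] using h
  obtain ⟨r₁, r₂, rfl, hx₁, hx₂⟩ := List.cons_sublist_iff.1 hx
  obtain ⟨a, b, rfl⟩ := List.append_of_mem hx₁
  obtain ⟨c, d, rfl⟩ := List.append_of_mem (List.singleton_sublist.1 hx₂)
  exact ⟨a, x, b ++ c, d, by simp⟩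

theorem edgeOn_iff {p : List V} {a c : V} : edgeOn p a c ↔ ∃ l m, p = l ++ a :: c :: m := by
  induction p using List.twoStepInduction with
  | nil => simp [edgeOn]
  | singleton x =>
    simp only [edgeOn, List.tail_cons, List.zip_nil_right, List.not_mem_nil, false_iff]
    rintro ⟨l, m, h⟩
    have := congrArg List.length h
    simp only [List.length_append, List.length_cons, List.length_nil] at this
    omega
  | cons_cons x y t _ ih =>
    simp only [edgeOn, List.tail_cons, List.zip_cons_cons, List.mem_cons,
      Prod.mk.injEq] at ih ⊢
    constructor
    · rintro (⟨rfl, rfl⟩ | h)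
      · exact ⟨[], t, rfl⟩
      · obtain ⟨l, m, h⟩ := (ih y).1 h
        exact ⟨x :: l, m, by simp [h]⟩
    · rintro ⟨_ | ⟨z, l⟩, m, h⟩
      · simp only [List.nil_append, List.cons.injEq] at h
        exact Or.inl ⟨h.1.symm, h.2.1.symm⟩
      · simp only [List.cons_append, List.cons.injEq] at h
        exact Or.inr ((ih y).2 ⟨l, m, h.2⟩)

theorem isChain_iff_forall_edgeOn {R : V → V → Prop} {p : List V} :
    p.IsChain R ↔ ∀ a c, edgeOn p a c → R a c := by
  simp only [List.isChain_iff_forall_rel_of_append_cons_cons, edgeOn_iff]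
  grind

theorem mem_tail_of_edgeOn {p : List V} {a c : V} (h : edgeOn p a c) : c ∈ p.tail :=
  (List.of_mem_zip h).2

section Weight

variable {w w' : V → V → ℝ≥0∞}

theorem isPath_iff {s t : V} {p : List V} :
    IsPath w s t p ↔ p ≠ [] ∧ p.head? = some s ∧ p.getLast? = some t ∧
      p.IsChain (fun a b => w a b ≠ ⊤) :=
  Iff.rfl

theorem pWeight_cons_cons (a b : V) (l : List V) :
    pWeight w (a :: b :: l) = w a b + pWeight w (b :: l) := by
  simp [pWeight]

theorem pWeight_append_cons (l : List V) (x : V) (m : List V) :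
    pWeight w (l ++ x :: m) = pWeight w (l ++ [x]) + pWeight w (x :: m) := by
  induction l with
  | nil => simp [pWeight]
  | cons a t ih =>
    cases t with
    | nil => simp [pWeight]
    | cons b t =>
      simp only [List.cons_append, pWeight_cons_cons] at ih ⊢
      rw [ih, add_assoc]

theorem pWeight_ne_top_of_isChain :
    ∀ {p : List V}, p.IsChain (fun a b => w a b ≠ ⊤) → pWeight w p ≠ ⊤
  | [], _ | [_], _ => by simp [pWeight]
  | a :: b :: l, h => by
    rw [List.isChain_cons_cons] at h
    rw [pWeight_cons_cons]
    exact ENNReal.add_ne_top.2 ⟨h.1, pWeight_ne_top_of_isChain h.2⟩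

theorem pWeight_congr {p : List V} (h : ∀ a c, edgeOn p a c → w a c = w' a c) :
    pWeight w p = pWeight w' p :=
  congrArg List.sum (List.map_congr_left fun e he => h e.1 e.2 he)

theorem pWeight_mono (h : ∀ a b, w a b ≤ w' a b) (p : List V) : pWeight w p ≤ pWeight w' p :=
  List.sum_le_sum fun e _ => h e.1 e.2

theorem IsPath.pWeight_ne_top {s t : V} {p : List V} (hp : IsPath w s t p) :
    pWeight w p ≠ ⊤ :=
  pWeight_ne_top_of_isChain hp.2.2.2

theorem IsPath.congr {s t : V} {p : List V} (h : ∀ a c, edgeOn p a c → w a c = w' a c)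
    (hp : IsPath w s t p) : IsPath w' s t p := by
  refine ⟨hp.1, hp.2.1, hp.2.2.1, isChain_iff_forall_edgeOn.2 fun a c hac => ?_⟩
  rw [← h a c hac]
  exact isChain_iff_forall_edgeOn.1 hp.2.2.2 a c hac

theorem IsPath.mono (h : ∀ a b, w' a b ≤ w a b) {s t : V} {p : List V}
    (hp : IsPath w s t p) : IsPath w' s t p :=
  ⟨hp.1, hp.2.1, hp.2.2.1, hp.2.2.2.imp fun a b hab => ne_top_of_le_ne_top hab (h a b)⟩

theorem isPath_append_cons {s t x : V} {l m : List V} :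
    IsPath w s t (l ++ x :: m) ↔ IsPath w s x (l ++ [x]) ∧ IsPath w x t (x :: m) := by
  have hhead : (l ++ x :: m).head? = (l ++ [x]).head? := by cases l <;> simp
  rw [isPath_iff, isPath_iff, isPath_iff, hhead, List.getLast?_append_cons, List.isChain_split]
  simp only [ne_eq, List.append_eq_nil_iff, reduceCtorEq, and_false, not_false_eq_true,
    List.getLast?_append_of_ne_nil, List.getLast?_singleton, List.head?_cons, true_and]
  tauto

theorem dist_le_pWeight {s t : V} {p : List V} (hp : IsPath w s t p) : dist w s t ≤ pWeight w p :=
  iInf₂_le p hp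

theorem dist_mono (h : ∀ a b, w' a b ≤ w a b) (s t : V) : dist w' s t ≤ dist w s t :=
  le_iInf₂ fun p hp => (dist_le_pWeight (hp.mono h)).trans (pWeight_mono h p)

theorem IsShortest.of_append_cons_left {s t x : V} {l m : List V}
    (h : IsShortest w s t (l ++ x :: m)) : IsShortest w s x (l ++ [x]) := by
  obtain ⟨hl, hm⟩ := isPath_append_cons.1 h.1
  refine ⟨hl, le_antisymm (le_iInf₂ fun q hq => ?_) (dist_le_pWeight hl)⟩
  obtain ⟨q₀, rfl⟩ := List.getLast?_eq_some_iff.1 hq.2.2.1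
  have hshort : pWeight w (l ++ x :: m) ≤ pWeight w (q₀ ++ x :: m) :=
    h.2 ▸ dist_le_pWeight (isPath_append_cons.2 ⟨hq, hm⟩)
  rwa [pWeight_append_cons, pWeight_append_cons q₀,
    ENNReal.add_le_add_iff_right hm.pWeight_ne_top] at hshort

theorem IsShortest.of_append_cons_right {s t x : V} {l m : List V}
    (h : IsShortest w s t (l ++ x :: m)) : IsShortest w x t (x :: m) := by
  obtain ⟨hl, hm⟩ := isPath_append_cons.1 h.1
  refine ⟨hm, le_antisymm (le_iInf₂ fun q hq => ?_) (dist_le_pWeight hm)⟩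
  obtain ⟨q₀, rfl⟩ := List.head?_eq_some_iff.1 hq.2.1
  have hshort : pWeight w (l ++ x :: m) ≤ pWeight w (l ++ x :: q₀) :=
    h.2 ▸ dist_le_pWeight (isPath_append_cons.2 ⟨hl, hq⟩)
  rwa [pWeight_append_cons l x m, pWeight_append_cons l x q₀,
    ENNReal.add_le_add_iff_left hl.pWeight_ne_top] at hshort

theorem IsShortest.nodup (hpos : ∀ a b, 0 < w a b) {s t : V} {p : List V}
    (h : IsShortest w s t p) : p.Nodup := by
  by_contra hdup
  obtain ⟨l, x, c, m, rfl⟩ := List.exists_eq_append_cons_append_cons_of_not_nodup hdup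
  obtain ⟨hl, hcm⟩ := isPath_append_cons.1 h.1
  have hm := (isPath_append_cons (l := x :: c)).1 hcm |>.2
  have hshortcut : IsPath w s t (l ++ x :: m) := isPath_append_cons.2 ⟨hl, hm⟩
  have hcycle : pWeight w (x :: (c ++ [x])) ≠ 0 := by
    obtain ⟨y, r, hyr⟩ := List.exists_cons_of_ne_nil (List.concat_ne_nil x c)
    rw [hyr, pWeight_cons_cons]
    exact ((hpos x y).trans_le le_self_add).ne'
  have hfin : pWeight w (l ++ [x]) + pWeight w (x :: m) ≠ ⊤ := by
    rw [← pWeight_append_cons]; exact hshortcut.pWeight_ne_top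
  refine lt_irrefl (dist w s t) ?_
  calc dist w s t
    _ ≤ pWeight w (l ++ x :: m) := dist_le_pWeight hshortcut
    _ = pWeight w (l ++ [x]) + pWeight w (x :: m) := pWeight_append_cons l x m
    _ < pWeight w (l ++ [x]) + pWeight w (x :: m) + pWeight w (x :: (c ++ [x])) :=
      ENNReal.lt_add_right hfin hcycle
    _ = pWeight w (l ++ x :: (c ++ x :: m)) := by
      have hsplit := pWeight_append_cons (w := w) (x :: c) x m
      simp only [List.cons_append] at hsplit
      rw [pWeight_append_cons l x (c ++ x :: m), hsplit]
      ring
    _ = dist w s t := h.2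

theorem IsShortest.of_le_of_edgeOn_eq {s t : V} {p : List V} (hle : ∀ a b, w' a b ≤ w a b)
    (heq : ∀ a c, edgeOn p a c → w' a c = w a c) (h : IsShortest w' s t p) :
    IsShortest w s t p := by
  have hp : IsPath w s t p := h.1.congr heq
  refine ⟨hp, le_antisymm ?_ (dist_le_pWeight hp)⟩
  calc pWeight w p = dist w' s t := (pWeight_congr heq).symm.trans h.2
    _ ≤ dist w s t := dist_mono hle s t

end Weight

theorem vertex_update_path_two_types_general
(w w' : V → V → ℝ≥0∞) (v : V) (U : Finset V)
    (hpos' : ∀ a b, 0 < w' a b)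
    (hdec : ∀ u ∈ U, w' u v < w u v)
    (hsame : ∀ a b : V, ¬(b = v ∧ a ∈ U) → w' a b = w a b)
    (b s : V) (p : List V) (hp : IsShortest w' b s p) :
    IsShortest w b s p ∨
    ∃ u ∈ U, ∃ p₁ p₂ : List V, p = p₁ ++ p₂ ∧
      p₁.getLast? = some u ∧ p₂.head? = some v ∧
      IsShortest w b u p₁ ∧ IsShortest w v s p₂ := by
  have hle : ∀ a c, w' a c ≤ w a c := fun a c => by
    by_cases h : c = v ∧ a ∈ U
    · exact h.1 ▸ (hdec a h.2).le
    · exact (hsame a c h).le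
  by_cases hcross : ∃ u ∈ U, edgeOn p u v
  · obtain ⟨u, hu, huv⟩ := hcross
    obtain ⟨l, m, rfl⟩ := edgeOn_iff.1 huv
    have hsplit : l ++ u :: v :: m = (l ++ [u]) ++ v :: m := by simp
    have hp' := hsplit ▸ hp
    obtain ⟨-, hnodup, hdisj⟩ := List.nodup_append.1 (hp'.nodup hpos')
    have hvm : v ∉ m := (List.nodup_cons.1 hnodup).1
    have hsame' : ∀ a c, c ≠ v → w' a c = w a c := fun a c hc => hsame a c fun h => hc h.1
    refine .inr ⟨u, hu, l ++ [u], v :: m, hsplit, by simp, rfl, ?_, ?_⟩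
    · refine hp.of_append_cons_left.of_le_of_edgeOn_eq hle fun a c hac => hsame' a c ?_
      exact hdisj c (List.mem_of_mem_tail (mem_tail_of_edgeOn hac)) v List.mem_cons_self
    · refine hp'.of_append_cons_right.of_le_of_edgeOn_eq hle fun a c hac => hsame' a c ?_
      exact ne_of_mem_of_not_mem (mem_tail_of_edgeOn hac) hvm
  · refine .inl (hp.of_le_of_edgeOn_eq hle fun a c hac => hsame a c ?_)
    exact fun ⟨hc, ha⟩ => hcross ⟨a, ha, hc ▸ hac⟩

/-- after an incremental update on the edges `E_i(v)` incoming to `v`,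
every shortest path `p` from `b` to `s` in `G'` either (i) is a shortest path in `G`,
or (ii) passes through `v`, having the form `b ⇝ u → v ⇝ s` for some `(u,v) ∈ E_i(v)`,
with prefix a shortest path from `b` to `u` in `G` and suffix a shortest path from
`v` to `s` in `G`. -/
theorem vertex_update_path_two_types [Fintype V]
(w w' : V → V → ℝ≥0∞) (v : V) (U : Finset V)
    (hpos : ∀ a b, 0 < w a b) (hpos' : ∀ a b, 0 < w' a b)
    (hdec : ∀ u ∈ U, w' u v < w u v)
    (hsame : ∀ a b : V, ¬(b = v ∧ a ∈ U) → w' a b = w a b)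
    (b s : V) (p : List V) (hp : IsShortest w' b s p) :
    IsShortest w b s p ∨
    ∃ u ∈ U, ∃ p₁ p₂ : List V, p = p₁ ++ p₂ ∧
      p₁.getLast? = some u ∧ p₂.head? = some v ∧
      IsShortest w b u p₁ ∧ IsShortest w v s p₂ :=
  vertex_update_path_two_types_general w w' v U hpos' hdec hsame b s p hp

end BC
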